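/- Assume Assumption A holds and μ(ω) > 0 for every ω (write μ_min = min_ω μ(ω)). Let π be a direct-revelation scheme such that adv_π(s) ≥ 0 for every s ∈ A with π(s) > 0, let α ∈ (0,1], and let π' be the α-robustification of π. Then for every s ∈ A one has π'(s) > 0 and adv_{π'}(s) ≥ α·μ_min·Δ. -/

import Mathlib

open Finset
open scoped BigOperators Classical

noncomputable section

/-- `p` is a family of probability distributions on the finite set `β`, indexed by `α`. -/
def IsDist {α β : Type*} [Fintype β] (p : α → β → ℝ) : Prop :=
  (∀ x y, 0 ≤ p x y) ∧ ∀ x, ∑ y, p x y = 1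

/-- `p` is a probability distribution on the finite set `β`. -/
def IsProb {β : Type*} [Fintype β] (p : β → ℝ) : Prop :=
  (∀ y, 0 ≤ p y) ∧ ∑ y, p y = 1

/-- The marginal probability `π(s)` of signal `s` under prior `μ` and signaling scheme `π`. -/
def marg {Ω S : Type*} [Fintype Ω] (μ : Ω → ℝ) (π : Ω → S → ℝ) (s : S) : ℝ :=
  ∑ ω, μ ω * π ω s

/-- The posterior probability `π(ω|s)` of state `ω` given signal `s`. -/
def post {Ω S : Type*} [Fintype Ω] (μ : Ω → ℝ) (π : Ω → S → ℝ) (ω : Ω) (s : S) : ℝ :=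
  μ ω * π ω s / marg μ π s

/-- The receiver's expected utility `v(a, μ_s)` of action `a` under the posterior of signal `s`. -/
def vPost {Ω S A : Type*} [Fintype Ω] (μ : Ω → ℝ) (π : Ω → S → ℝ)
    (v : A → Ω → ℝ) (a : A) (s : S) : ℝ :=
  ∑ ω, post μ π ω s * v a ω

/-- Action `a` is `γ`-best-responding to signal `s`. -/
def IsBR {Ω S A : Type*} [Fintype Ω] [Fintype A] (μ : Ω → ℝ) (π : Ω → S → ℝ)
    (v : A → Ω → ℝ) (γ : ℝ) (a : A) (s : S) : Prop :=
  ∀ a' : A, vPost μ π v a' s - γ ≤ vPost μ π v a s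

/-- `ρ` is a `γ`-best-responding receiver strategy: on every signal that is sent with positive
probability, it puts probability `1` on `γ`-best-responding actions (equivalently, probability `0`
on every action that is not `γ`-best-responding). -/
def IsBRStrategy {Ω S A : Type*} [Fintype Ω] [Fintype A] (μ : Ω → ℝ) (π : Ω → S → ℝ)
    (v : A → Ω → ℝ) (γ : ℝ) (ρ : S → A → ℝ) : Prop :=
  ∀ s, 0 < marg μ π s → ∀ a, ¬ IsBR μ π v γ a s → ρ s a = 0

/-- `ρ` is a `(γ, δ)`-best-responding receiver strategy: on every signal that is sent with
positive probability, it puts probability at least `1 - δ` on `γ`-best-responding actions. -/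
def IsApproxBRStrategy {Ω S A : Type*} [Fintype Ω] [Fintype A] (μ : Ω → ℝ) (π : Ω → S → ℝ)
    (v : A → Ω → ℝ) (γ δ : ℝ) (ρ : S → A → ℝ) : Prop :=
  ∀ s, 0 < marg μ π s →
    1 - δ ≤ ∑ a ∈ Finset.univ.filter (fun a => IsBR μ π v γ a s), ρ s a

/-- The sender's expected utility `U_μ(π, ρ)`. -/
def senderU {Ω S A : Type*} [Fintype Ω] [Fintype S] [Fintype A] (μ : Ω → ℝ) (π : Ω → S → ℝ)
    (u : A → Ω → ℝ) (ρ : S → A → ℝ) : ℝ :=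
  ∑ ω, ∑ s, μ ω * π ω s * ∑ a, ρ s a * u a ω

/-- The obedient strategy for a direct-revelation scheme: take the recommended action. -/
def obedient {A : Type*} : A → A → ℝ := fun s a => if a = s then 1 else 0

/-- `OPT^BP(μ)`: the supremum of the sender's expected utility over direct-revelation schemes
(signal set `S = A`) and best-responding (`0`-best-responding) receiver strategies. -/
def OPTBP {Ω A : Type*} [Fintype Ω] [Fintype A] (μ : Ω → ℝ) (v u : A → Ω → ℝ) : ℝ :=
  sSup {x | ∃ (π : Ω → A → ℝ) (ρ : A → A → ℝ), IsDist π ∧ IsDist ρ ∧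
    IsBRStrategy μ π v 0 ρ ∧ x = senderU μ π u ρ}

/-- The `α`-robustification of a direct-revelation scheme `π`, where `aOf ω` is the receiver's
unique optimal action at state `ω`. -/
def robustify {Ω A : Type*} (π : Ω → A → ℝ) (aOf : Ω → A) (α : ℝ) : Ω → A → ℝ :=
  fun ω s => (1 - α) * π ω s + if s = aOf ω then α else 0

/-- `μ(Ω_a)`: the prior mass of the set of states whose unique optimal action is `a`. -/
def massOf {Ω A : Type*} [Fintype Ω] (μ : Ω → ℝ) (aOf : Ω → A) (a : A) : ℝ :=
  ∑ ω ∈ Finset.univ.filter (fun ω => aOf ω = a), μ ω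

/-- `μ_min = min_ω μ(ω)`. -/
def minPrior {Ω : Type*} [Fintype Ω] [Nonempty Ω] (μ : Ω → ℝ) : ℝ :=
  Finset.univ.inf' Finset.univ_nonempty μ

/-- The advantage term of recommendation `s` against deviation `a` in a direct-revelation
scheme `π`: the advantage `adv_π(s)` is the minimum of this quantity over `a ≠ s`. -/
def advTerm {Ω A : Type*} [Fintype Ω] (μ : Ω → ℝ) (π : Ω → A → ℝ) (v : A → Ω → ℝ)
    (s a : A) : ℝ :=
  ∑ ω, post μ π ω s * (v s ω - v a ω)

/-!
Clearing the denominator, `adv_{π'}(s)` has the sign of the joint advantage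
`∑ ω, μ ω π'(s|ω) (v(s,ω) - v(a,ω))`, which is affine in the scheme. For the robustification it
splits into `(1 - α)` times the joint advantage of `π`, nonnegative by obedience of `π`, plus `α`
times the joint advantage of full revelation on `Ω_s`, at least `μ_min Δ` because `Ω_s` is
nonempty and every state there favours `s` by `Δ`. Dividing by `π'(s) ≤ 1` only increases it.
-/

open Finset

lemma IsDist.le_one {Ω A : Type*} [Fintype A] {π : Ω → A → ℝ} (hπ : IsDist π) (ω : Ω) (s : A) :
    π ω s ≤ 1 :=
  hπ.2 ω ▸ single_le_sum (fun t _ => hπ.1 ω t) (mem_univ s)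

section Advantage

variable {Ω A : Type*} [Fintype Ω]

def jointAdvTerm (μ : Ω → ℝ) (π : Ω → A → ℝ) (v : A → Ω → ℝ) (s a : A) : ℝ :=
  ∑ ω, μ ω * π ω s * (v s ω - v a ω)

lemma advTerm_eq_jointAdvTerm_div (μ : Ω → ℝ) (π : Ω → A → ℝ) (v : A → Ω → ℝ) (s a : A) :
    advTerm μ π v s a = jointAdvTerm μ π v s a / marg μ π s := by
  simp only [advTerm, post, jointAdvTerm, sum_div, div_mul_eq_mul_div]

lemma marg_nonneg {μ : Ω → ℝ} {π : Ω → A → ℝ} {s : A} (hμ : ∀ ω, 0 ≤ μ ω)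
    (hπ : ∀ ω, 0 ≤ π ω s) : 0 ≤ marg μ π s :=
  sum_nonneg fun ω _ => mul_nonneg (hμ ω) (hπ ω)

lemma marg_pos_of_pos {μ : Ω → ℝ} {π : Ω → A → ℝ} {s : A} (hμ : ∀ ω, 0 ≤ μ ω)
    (hπ : ∀ ω, 0 ≤ π ω s) {ω₀ : Ω} (hμω₀ : 0 < μ ω₀) (hπω₀ : 0 < π ω₀ s) :
    0 < marg μ π s :=
  sum_pos' (fun ω _ => mul_nonneg (hμ ω) (hπ ω)) ⟨ω₀, mem_univ _, mul_pos hμω₀ hπω₀⟩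

lemma marg_le_one [Fintype A] {μ : Ω → ℝ} {π : Ω → A → ℝ} (hμ : IsProb μ) (hπ : IsDist π)
    (s : A) : marg μ π s ≤ 1 :=
  calc marg μ π s ≤ ∑ ω, μ ω :=
        sum_le_sum fun ω _ => mul_le_of_le_one_right (hμ.1 ω) (hπ.le_one ω s)
    _ = 1 := hμ.2

/-- On a signal that is never sent the joint advantage vanishes, so obedience on the signals
that are sent suffices. -/
lemma jointAdvTerm_nonneg {μ : Ω → ℝ} {π : Ω → A → ℝ} {v : A → Ω → ℝ} {s a : A}
    (hμ : ∀ ω, 0 ≤ μ ω) (hπ : ∀ ω, 0 ≤ π ω s) (hadv : 0 < marg μ π s → 0 ≤ advTerm μ π v s a) :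
    0 ≤ jointAdvTerm μ π v s a := by
  rcases (marg_nonneg hμ hπ).eq_or_lt with hzero | hpos
  · have hjoint : ∀ ω ∈ univ, μ ω * π ω s = 0 :=
      (sum_eq_zero_iff_of_nonneg fun ω _ => mul_nonneg (hμ ω) (hπ ω)).mp hzero.symm
    simp [jointAdvTerm, hjoint]
  · have := hadv hpos
    rw [advTerm_eq_jointAdvTerm_div] at this
    simpa [div_mul_cancel₀ _ hpos.ne'] using mul_nonneg this hpos.le

lemma le_advTerm_of_le_jointAdvTerm {μ : Ω → ℝ} {π : Ω → A → ℝ} {v : A → Ω → ℝ} {s a : A}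
    {c : ℝ} (hc : 0 ≤ c) (hpos : 0 < marg μ π s) (hle : marg μ π s ≤ 1)
    (h : c ≤ jointAdvTerm μ π v s a) : c ≤ advTerm μ π v s a := by
  rw [advTerm_eq_jointAdvTerm_div]
  exact h.trans (le_div_self (hc.trans h) hpos hle)

end Advantage

section MinPrior

variable {Ω : Type*} [Fintype Ω] [Nonempty Ω]

lemma minPrior_le (μ : Ω → ℝ) (ω : Ω) : minPrior μ ≤ μ ω :=
  inf'_le μ (mem_univ ω)

lemma minPrior_nonneg {μ : Ω → ℝ} (hμ : ∀ ω, 0 ≤ μ ω) : 0 ≤ minPrior μ :=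
  le_inf' _ _ fun ω _ => hμ ω

lemma minPrior_mul_le_sum {μ : Ω → ℝ} (hμ : ∀ ω, 0 ≤ μ ω) {Δ : ℝ} (hΔ : 0 ≤ Δ)
    {t : Finset Ω} {g : Ω → ℝ} (hg : ∀ ω ∈ t, Δ ≤ g ω) {ω₀ : Ω} (hω₀ : ω₀ ∈ t) :
    minPrior μ * Δ ≤ ∑ ω ∈ t, μ ω * g ω :=
  calc minPrior μ * Δ ≤ μ ω₀ * g ω₀ :=
        mul_le_mul (minPrior_le μ ω₀) (hg ω₀ hω₀) hΔ (hμ ω₀)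
    _ ≤ ∑ ω ∈ t, μ ω * g ω :=
        single_le_sum (fun ω hω => mul_nonneg (hμ ω) (hΔ.trans (hg ω hω))) hω₀

end MinPrior

section Robustify

variable {Ω A : Type*}

lemma robustify_isDist [Fintype A] {π : Ω → A → ℝ} (aOf : Ω → A) (hπ : IsDist π) {α : ℝ}
    (hα0 : 0 ≤ α) (hα1 : α ≤ 1) : IsDist (robustify π aOf α) := by
  refine ⟨fun ω s => ?_, fun ω => ?_⟩
  · have := mul_nonneg (sub_nonneg.mpr hα1) (hπ.1 ω s)
    simp only [robustify]
    split_ifs <;> linarith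
  · simp [robustify, sum_add_distrib, ← mul_sum, hπ.2 ω]

lemma le_robustify_self {π : Ω → A → ℝ} (aOf : Ω → A) {α : ℝ} (hα1 : α ≤ 1) {ω : Ω}
    (hπ : 0 ≤ π ω (aOf ω)) : α ≤ robustify π aOf α ω (aOf ω) := by
  simp only [robustify, if_true]
  nlinarith

lemma jointAdvTerm_robustify [Fintype Ω] (μ : Ω → ℝ) (π : Ω → A → ℝ) (v : A → Ω → ℝ)
    (aOf : Ω → A) (α : ℝ) (s a : A) :
    jointAdvTerm μ (robustify π aOf α) v s a = (1 - α) * jointAdvTerm μ π v s a +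
      α * ∑ ω ∈ univ.filter (fun ω => aOf ω = s), μ ω * (v s ω - v a ω) := by
  simp only [jointAdvTerm, robustify, sum_filter, mul_sum, ← sum_add_distrib]
  refine sum_congr rfl fun ω _ => ?_
  by_cases h : aOf ω = s
  · simp only [h, if_true]
    ring
  · simp only [h, Ne.symm h, if_false]
    ring

end Robustify

theorem robustified_advantage_positive_general
    {Ω A : Type*} [Fintype Ω] [Fintype A] [Nonempty Ω]
    (μ : Ω → ℝ) (hμ : IsProb μ) (hμpos : ∀ ω, 0 < μ ω)
    (v : A → Ω → ℝ)
    -- Assumption A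
    (aOf : Ω → A)
    (Δ : ℝ) (hΔpos : 0 < Δ) (hΔ : ∀ ω a, a ≠ aOf ω → Δ ≤ v (aOf ω) ω - v a ω)
    (hOnto : ∀ a, ∃ ω, aOf ω = a)
    (π : Ω → A → ℝ) (hπ : IsDist π)
    (hadv : ∀ s, 0 < marg μ π s → ∀ a, a ≠ s → 0 ≤ advTerm μ π v s a)
    (α : ℝ) (hα0 : 0 < α) (hα1 : α ≤ 1) :
    ∀ s : A, 0 < marg μ (robustify π aOf α) s ∧
      ∀ a, a ≠ s → α * minPrior μ * Δ ≤ advTerm μ (robustify π aOf α) v s a := by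
  intro s
  obtain ⟨ω₀, rfl⟩ := hOnto s
  have hμ0 : ∀ ω, 0 ≤ μ ω := fun ω => (hμpos ω).le
  have hπ' := robustify_isDist aOf hπ hα0.le hα1
  have hmarg : 0 < marg μ (robustify π aOf α) (aOf ω₀) :=
    marg_pos_of_pos hμ0 (fun ω => hπ'.1 ω _) (hμpos ω₀)
      (hα0.trans_le (le_robustify_self aOf hα1 (hπ.1 ω₀ _)))
  refine ⟨hmarg, fun a ha => ?_⟩
  have hold : 0 ≤ jointAdvTerm μ π v (aOf ω₀) a :=
    jointAdvTerm_nonneg hμ0 (fun ω => hπ.1 ω _) fun h => hadv _ h a ha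
  have hrevealed : minPrior μ * Δ ≤
      ∑ ω ∈ univ.filter (fun ω => aOf ω = aOf ω₀), μ ω * (v (aOf ω₀) ω - v a ω) :=
    minPrior_mul_le_sum hμ0 hΔpos.le
      (fun ω hω => (mem_filter.mp hω).2 ▸ hΔ ω a ((mem_filter.mp hω).2 ▸ ha))
      (mem_filter.mpr ⟨mem_univ ω₀, rfl⟩)
  refine le_advTerm_of_le_jointAdvTerm
    (mul_nonneg (mul_nonneg hα0.le (minPrior_nonneg hμ0)) hΔpos.le) hmarg (marg_le_one hμ hπ' _) ?_
  rw [jointAdvTerm_robustify, mul_assoc]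
  linarith [mul_nonneg (sub_nonneg.mpr hα1) hold, mul_le_mul_of_nonneg_left hrevealed hα0.le]

/-- under Assumption A with a fully supported prior, if `π` is a
direct-revelation scheme with `adv_π(s) ≥ 0` on all sent signals, then its `α`-robustification
`π'` (with `0 < α ≤ 1`) has `π'(s) > 0` and `adv_{π'}(s) ≥ α·μ_min·Δ` for every signal `s`.
(`adv_{π'}(s) ≥ c` is expressed as `c ≤ advTerm` for every deviation `a ≠ s`.) -/
theorem robustified_advantage_positive
    {Ω A : Type*} [Fintype Ω] [Fintype A] [Nonempty Ω] [Nonempty A]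
    (μ : Ω → ℝ) (hμ : IsProb μ) (hμpos : ∀ ω, 0 < μ ω)
    (v : A → Ω → ℝ) (hv : ∀ a ω, 0 ≤ v a ω ∧ v a ω ≤ 1)
    -- Assumption A
    (aOf : Ω → A) (hBest : ∀ ω a, a ≠ aOf ω → v a ω < v (aOf ω) ω)
    (Δ : ℝ) (hΔpos : 0 < Δ) (hΔ : ∀ ω a, a ≠ aOf ω → Δ ≤ v (aOf ω) ω - v a ω)
    (hOnto : ∀ a, ∃ ω, aOf ω = a)
    (π : Ω → A → ℝ) (hπ : IsDist π)
    (hadv : ∀ s, 0 < marg μ π s → ∀ a, a ≠ s → 0 ≤ advTerm μ π v s a)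
    (α : ℝ) (hα0 : 0 < α) (hα1 : α ≤ 1) :
    ∀ s : A, 0 < marg μ (robustify π aOf α) s ∧
      ∀ a, a ≠ s → α * minPrior μ * Δ ≤ advTerm μ (robustify π aOf α) v s a :=
  robustified_advantage_positive_general μ hμ hμpos v aOf Δ hΔpos hΔ hOnto π hπ hadv α hα0 hα1
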